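/- Let σ with vertices v₁,…,v_ℓ (in order along σ) be a δ-signature of a polygonal curve τ, and let r_i = [v_i − δ, v_i + δ] for 1 ≤ i ≤ ℓ. Then for every polygonal curve π with d_F(τ, π) ≤ δ, there exist parameters 0 ≤ p₁ ≤ p₂ ≤ … ≤ p_ℓ ≤ 1 such that each π(p_i) is a vertex of π (endpoints included) and π(p_i) ∈ r_i for every i; that is, π has a vertex in each range r_i, and these vertices appear along π in the order of i. -/

import Mathlib

/-!
Choose a reparametrization `f` matching `τ` to `π` up to `δ + ε` and pull the signature
parameters back to `q i` with `f (q i) = s i`. By the range and minimum-edge-length conditions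
every inner signature vertex is an extremum of `τ` between its two neighbours, so `τ ∘ f` is
extremal at `q (k + 1)` on `[q k, q (k + 2)]`. The same extremum of the piecewise linear `π` on
`[max (p k) (q k), q (k + 2)]` is `(δ + ε)`-close to `τ (s (k + 1))`, and it is attained at a
vertex of `π`: the endpoints of the interval are vertices or, because inner edges of the
signature are longer than `2 (δ + ε)`, too far from `τ (s (k + 1))`. That vertex is `p (k + 1)`.
Only finitely many distances between vertices of `π` and of the signature occur, so `ε` can be
taken below every positive excess over `δ`, which turns `δ + ε` into `δ`.
-/

open Set

/-- A valid reparametrization of `[0,1]`: a continuous strictly increasing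
bijection of `[0,1]` onto itself fixing the endpoints. -/
def IsReparam (f : ℝ → ℝ) : Prop :=
  ContinuousOn f (Set.Icc 0 1) ∧ StrictMonoOn f (Set.Icc 0 1) ∧ f 0 = 0 ∧ f 1 = 1

/-- The Fréchet distance between two curves `τ, π : [0,1] → ℝ`:
`inf_f sup_{t ∈ [0,1]} |τ(f(t)) - π(t)|` over reparametrizations `f`. -/
noncomputable def frechetDist (τ π : ℝ → ℝ) : ℝ :=
  ⨅ f : {f : ℝ → ℝ // IsReparam f}, ⨆ t : Set.Icc (0:ℝ) 1, |τ (f.1 ↑t) - π ↑t|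

/-- `τ` is the polygonal curve on `[0,1]` with the `m` vertices `w 0, …, w (m-1)`
attained at parameters `t 0 = 0 < t 1 < … < t (m-1) = 1`, obtained by linear
interpolation. -/
def IsPolyOn (τ : ℝ → ℝ) (m : ℕ) (t w : ℕ → ℝ) : Prop :=
  2 ≤ m ∧ t 0 = 0 ∧ t (m - 1) = 1 ∧ (∀ i, i + 1 < m → t i < t (i + 1)) ∧
  (∀ i, i + 1 < m → ∀ u ∈ Set.Icc (t i) (t (i + 1)),
    τ u = w i + (u - t i) / (t (i + 1) - t i) * (w (i + 1) - w i))

/-- `τ` is a polygonal curve (with finitely many vertices). -/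
def IsPolyCurve (τ : ℝ → ℝ) : Prop := ∃ m t w, IsPolyOn τ m t w

/-- `c` is a polygonal curve with at most `ℓ` vertices, i.e. an element of `Δ_ℓ`. -/
def InDeltaL (ℓ : ℕ) (c : ℝ → ℝ) : Prop := ∃ m t w, m ≤ ℓ ∧ IsPolyOn c m t w

/-- General position of the vertex sequence `w 0, …, w (m-1)`: pairwise distinct
vertex values, pairwise distinct differences, and no vertex inside the closed
interval spanned by its two neighbours. -/
def GenPos (m : ℕ) (w : ℕ → ℝ) : Prop :=
  (∀ i j, i < m → j < m → i ≠ j → w i ≠ w j) ∧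
  (∀ i j p q, i < m → j < m → p < m → q < m → i ≠ j → p ≠ q →
      (i, j) ≠ (p, q) → w i - w j ≠ w p - w q) ∧
  (∀ i, i + 2 < m → w (i + 1) ∉ Set.uIcc (w i) (w (i + 2)))

/-- The parameters `s 0 = 0 < s 1 < … < s (ℓ-1) = 1` define a `δ`-signature of the
curve `τ` (Definition 3.3 of the paper, `0`-indexed): non-degeneracy,
direction-preservation, minimum edge length and range conditions. -/
def IsSignature (δ : ℝ) (τ : ℝ → ℝ) (ℓ : ℕ) (s : ℕ → ℝ) : Prop :=
  2 ≤ ℓ ∧ s 0 = 0 ∧ s (ℓ - 1) = 1 ∧ (∀ i, i + 1 < ℓ → s i < s (i + 1)) ∧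
  (∀ i, 1 ≤ i → i + 1 < ℓ → τ (s i) ∉ Set.uIcc (τ (s (i - 1))) (τ (s (i + 1)))) ∧
  (∀ i, i + 1 < ℓ → ∀ a b : ℝ, s i ≤ a → a < b → b ≤ s (i + 1) →
      (τ (s i) < τ (s (i + 1)) → τ a - τ b ≤ 2 * δ) ∧
      (τ (s (i + 1)) < τ (s i) → τ b - τ a ≤ 2 * δ)) ∧
  (∀ i, 1 ≤ i → i + 3 ≤ ℓ → 2 * δ < |τ (s (i + 1)) - τ (s i)|) ∧
  δ < |τ (s 1) - τ (s 0)| ∧ δ < |τ (s (ℓ - 1)) - τ (s (ℓ - 2))| ∧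
  (∀ i, 1 ≤ i → i + 3 ≤ ℓ → ∀ a ∈ Set.Icc (s i) (s (i + 1)),
      τ a ∈ Set.uIcc (τ (s i)) (τ (s (i + 1)))) ∧
  (2 < ℓ → ∀ a ∈ Set.Icc (s 0) (s 1),
      τ a ∈ Set.uIcc (τ (s 0)) (τ (s 1)) ∪ Set.Icc (τ (s 0) - δ) (τ (s 0) + δ)) ∧
  (2 < ℓ → ∀ a ∈ Set.Icc (s (ℓ - 2)) (s (ℓ - 1)),
      τ a ∈ Set.uIcc (τ (s (ℓ - 2))) (τ (s (ℓ - 1))) ∪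
        Set.Icc (τ (s (ℓ - 1)) - δ) (τ (s (ℓ - 1)) + δ)) ∧
  (ℓ = 2 → ∀ a ∈ Set.Icc (s 0) (s 1),
      τ a ∈ Set.uIcc (τ (s 0)) (τ (s 1)) ∪ Set.Icc (τ (s 0) - δ) (τ (s 0) + δ) ∪
        Set.Icc (τ (s 1) - δ) (τ (s 1) + δ))

open Filter Topology

theorem strictMonoOn_Iio_of_lt_add_one {α : Type*} [Preorder α] {a : ℕ → α} {n : ℕ}
    (h : ∀ i, i + 1 < n → a i < a (i + 1)) : StrictMonoOn a (Iio n) :=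
  (strictMonoOn_Iic_of_lt_succ (n := n - 1) fun i hi => h i (by omega)).mono
    fun i (hi : i < n) => show i ≤ n - 1 by omega

theorem MonotoneOn.apply_mem_Icc_of_lt {α : Type*} [Preorder α] {a : ℕ → α} {n i : ℕ}
    (h : MonotoneOn a (Iio n)) (hi : i < n) : a i ∈ Icc (a 0) (a (n - 1)) :=
  ⟨h (show 0 < n by omega) hi (Nat.zero_le i), h hi (show n - 1 < n by omega) (by omega)⟩

theorem exists_monotone_of_forall_exists_le {α : Type*} [Preorder α] {P : ℕ → α → Prop} {x₀ : α}
    (h₀ : P 0 x₀) (h : ∀ k x, P k x → ∃ y, x ≤ y ∧ P (k + 1) y) :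
    ∃ p : ℕ → α, Monotone p ∧ ∀ k, P k (p k) := by
  choose g hg using h
  let p : (k : ℕ) → {x // P k x} := fun k =>
    Nat.rec ⟨x₀, h₀⟩ (fun k y => ⟨g k y.1 y.2, (hg k y.1 y.2).2⟩) k
  exact ⟨fun k => (p k).1, monotone_nat_of_le_succ fun k => (hg k _ (p k).2).1, fun k => (p k).2⟩

theorem lt_abs_sub_of_two_mul_lt {a b c η : ℝ} (hab : 2 * η < |a - b|) (hbc : |b - c| ≤ η) :
    η < |a - c| := by
  linarith [abs_sub_le a c b, abs_sub_comm c b]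

theorem le_and_le_of_mem_uIcc_union_Icc {a b y δ : ℝ} (hy : y ∈ uIcc a b ∪ Icc (a - δ) (a + δ))
    (hδ : δ < |b - a|) : (a ≤ b → y ≤ b) ∧ (b ≤ a → b ≤ y) := by
  rcases hy with hy | hy
  · rcases Set.mem_uIcc.1 hy with h | h <;> constructor <;> intro <;> linarith [h.1, h.2]
  · constructor <;> intro hab
    · rw [abs_of_nonneg (sub_nonneg.2 hab)] at hδ
      linarith [hy.2]
    · rw [abs_of_nonpos (sub_nonpos.2 hab)] at hδ
      linarith [hy.1]

theorem Filter.eventually_forall_lt {α : Type*} {l : Filter α} {n : ℕ} {p : ℕ → α → Prop}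
    (h : ∀ i < n, ∀ᶠ x in l, p i x) : ∀ᶠ x in l, ∀ i < n, p i x :=
  (eventually_all_finite (finite_lt_nat n)).2 h

theorem eventually_two_mul_add_lt {δ e : ℝ} (h : 2 * δ < e) :
    ∀ᶠ ε in 𝓝[>] (0 : ℝ), 2 * (δ + ε) < e := by
  filter_upwards [Ioo_mem_nhdsGT (show 0 < (e - 2 * δ) / 2 by linarith)] with ε hε
  linarith [hε.2]

theorem eventually_le_of_le_add (x δ : ℝ) : ∀ᶠ ε in 𝓝[>] (0 : ℝ), x ≤ δ + ε → x ≤ δ := by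
  rcases le_or_gt x δ with h | h
  · exact Eventually.of_forall fun _ _ => h
  · filter_upwards [Ioo_mem_nhdsGT (sub_pos.2 h)] with ε hε hx
    linarith [hε.2]

namespace IsPolyOn

variable {ψ : ℝ → ℝ} {m : ℕ} {t w : ℕ → ℝ}

theorem strictMonoOn_knots (hψ : IsPolyOn ψ m t w) : StrictMonoOn t (Iio m) :=
  strictMonoOn_Iio_of_lt_add_one hψ.2.2.2.1

theorem knots_subset_Icc (hψ : IsPolyOn ψ m t w) : t '' Iio m ⊆ Icc 0 1 := by
  rintro _ ⟨j, hj, rfl⟩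
  simpa only [hψ.2.1, hψ.2.2.1] using hψ.strictMonoOn_knots.monotoneOn.apply_mem_Icc_of_lt hj

theorem zero_mem_knots (hψ : IsPolyOn ψ m t w) : (0 : ℝ) ∈ t '' Iio m :=
  ⟨0, show 0 < m by linarith [hψ.1], hψ.2.1⟩

theorem one_mem_knots (hψ : IsPolyOn ψ m t w) : (1 : ℝ) ∈ t '' Iio m :=
  ⟨m - 1, show m - 1 < m by have := hψ.1; omega, hψ.2.2.1⟩

theorem exists_segment (hψ : IsPolyOn ψ m t w) {u : ℝ} (hu : u ∈ Icc (0 : ℝ) 1) :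
    ∃ i, i + 1 < m ∧ u ∈ Icc (t i) (t (i + 1)) := by
  obtain ⟨hm, ht0, ht1, -, -⟩ := hψ
  suffices key : ∀ n, n + 1 < m → u ≤ t (n + 1) → ∃ i ≤ n, u ∈ Icc (t i) (t (i + 1)) by
    obtain ⟨i, hi, hui⟩ :=
      key (m - 2) (by omega) (by rw [show m - 2 + 1 = m - 1 by omega, ht1]; exact hu.2)
    exact ⟨i, by omega, hui⟩
  intro n
  induction n with
  | zero => exact fun _ h => ⟨0, le_rfl, by rw [ht0]; exact hu.1, h⟩
  | succ n ih =>
    intro hn hu'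
    rcases le_or_gt u (t (n + 1)) with h | h
    · obtain ⟨i, hi, hui⟩ := ih (by omega) h
      exact ⟨i, by omega, hui⟩
    · exact ⟨n + 1, le_rfl, h.le, hu'⟩

theorem apply_mem_uIcc (hψ : IsPolyOn ψ m t w) {i : ℕ} (hi : i + 1 < m) {a u b : ℝ}
    (ha : t i ≤ a) (hau : a ≤ u) (hub : u ≤ b) (hb : b ≤ t (i + 1)) :
    ψ u ∈ uIcc (ψ a) (ψ b) := by
  have hf := hψ.2.2.2.2 i hi
  set c := (w (i + 1) - w i) / (t (i + 1) - t i)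
  have hslope : ∀ x ∈ Icc (t i) (t (i + 1)), ψ x = w i + (x - t i) * c := fun x hx => by
    rw [hf x hx]; ring
  have h₁ : ψ u - ψ a = (u - a) * c := by
    rw [hslope u ⟨by linarith, by linarith⟩, hslope a ⟨ha, by linarith⟩]; ring
  have h₂ : ψ b - ψ u = (b - u) * c := by
    rw [hslope u ⟨by linarith, by linarith⟩, hslope b ⟨by linarith, hb⟩]; ring
  rcases le_total 0 c with hc | hc
  · exact Set.mem_uIcc.2 (Or.inl ⟨by nlinarith, by nlinarith⟩)
  · exact Set.mem_uIcc.2 (Or.inr ⟨by nlinarith, by nlinarith⟩)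

theorem abs_le_sum (hψ : IsPolyOn ψ m t w) {u : ℝ} (hu : u ∈ Icc (0 : ℝ) 1) :
    |ψ u| ≤ ∑ j ∈ Finset.range m, |ψ (t j)| := by
  obtain ⟨i, hi, hui⟩ := hψ.exists_segment hu
  have hbound : ∀ j, j < m → |ψ (t j)| ≤ ∑ j ∈ Finset.range m, |ψ (t j)| := fun j hj =>
    Finset.single_le_sum (f := fun j => |ψ (t j)|) (fun _ _ => abs_nonneg _) (Finset.mem_range.2 hj)
  calc |ψ u| ≤ max |ψ (t i)| |ψ (t (i + 1))| := by
        rcases Set.mem_uIcc.1 (hψ.apply_mem_uIcc hi le_rfl hui.1 hui.2 le_rfl) with h | h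
        · exact abs_le_max_abs_abs h.1 h.2
        · rw [max_comm]; exact abs_le_max_abs_abs h.1 h.2
    _ ≤ _ := max_le (hbound i (by omega)) (hbound (i + 1) hi)

theorem neg (hψ : IsPolyOn ψ m t w) : IsPolyOn (fun u => -ψ u) m t (fun j => -w j) := by
  obtain ⟨hm, ht0, ht1, hmono, hf⟩ := hψ
  refine ⟨hm, ht0, ht1, hmono, fun i hi u hu => ?_⟩
  simp only [hf i hi u hu]
  ring

theorem exists_isMaxOn_Icc (hψ : IsPolyOn ψ m t w) {L R : ℝ} (hL : 0 ≤ L) (hLR : L ≤ R)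
    (hR : R ≤ 1) : ∃ v ∈ Icc L R, (v = L ∨ v = R ∨ v ∈ t '' Iio m) ∧ IsMaxOn ψ (Icc L R) v := by
  set F : Set ℝ := insert L (insert R (t '' Iio m ∩ Icc L R))
  have hFfin : F.Finite := (((finite_Iio m).image t).inter_of_left _).insert _ |>.insert _
  have hF : F ⊆ Icc L R := by
    rintro x (rfl | rfl | ⟨-, hx⟩)
    exacts [⟨le_rfl, hLR⟩, ⟨hLR, le_rfl⟩, hx]
  obtain ⟨v, hvF, hvmax⟩ := exists_max_image F ψ hFfin ⟨L, mem_insert _ _⟩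
  refine ⟨v, hF hvF, ?_, fun u hu => ?_⟩
  · rcases hvF with rfl | rfl | ⟨hv, -⟩
    exacts [Or.inl rfl, Or.inr (Or.inl rfl), Or.inr (Or.inr hv)]
  obtain ⟨i, hi, hui⟩ := hψ.exists_segment ⟨hL.trans hu.1, hu.2.trans hR⟩
  have ha : max (t i) L ∈ F := by
    rcases le_total (t i) L with h | h
    · rw [max_eq_right h]; exact mem_insert _ _
    · rw [max_eq_left h]
      exact mem_insert_of_mem _ (mem_insert_of_mem _
        ⟨⟨i, show i < m by omega, rfl⟩, h, hui.1.trans hu.2⟩)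
  have hb : min (t (i + 1)) R ∈ F := by
    rcases le_total (t (i + 1)) R with h | h
    · rw [min_eq_left h]
      exact mem_insert_of_mem _ (mem_insert_of_mem _ ⟨⟨i + 1, hi, rfl⟩, hu.1.trans hui.2, h⟩)
    · rw [min_eq_right h]; exact mem_insert_of_mem _ (mem_insert _ _)
  have hu' := hψ.apply_mem_uIcc hi (le_max_left _ _) (max_le hui.1 hu.1) (le_min hui.2 hu.2)
    (min_le_left _ _)
  exact (Set.mem_uIcc.1 hu').elim (fun h => h.2.trans (hvmax _ hb))
    (fun h => h.2.trans (hvmax _ ha))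

theorem exists_knot_near_of_isMaxOn (hψ : IsPolyOn ψ m t w) {φ : ℝ → ℝ} {η L c R : ℝ}
    (hL : 0 ≤ L) (hLc : L ≤ c) (hcR : c ≤ R) (hR : R ≤ 1) (hφ : IsMaxOn φ (Icc L R) c)
    (hclose : ∀ u ∈ Icc L R, |φ u - ψ u| ≤ η)
    (hLknot : L ∈ t '' Iio m ∨ η < |φ c - ψ L|) (hRknot : R ∈ t '' Iio m ∨ η < |φ c - ψ R|) :
    ∃ v ∈ Icc L R, v ∈ t '' Iio m ∧ |φ c - ψ v| ≤ η := by
  obtain ⟨v, hv, hcand, hvmax⟩ := hψ.exists_isMaxOn_Icc hL (hLc.trans hcR) hR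
  have hc : c ∈ Icc L R := ⟨hLc, hcR⟩
  have hnear : |φ c - ψ v| ≤ η := by
    have h₁ := abs_sub_le_iff.1 (hclose c hc)
    have h₂ := abs_sub_le_iff.1 (hclose v hv)
    have h₃ : ψ c ≤ ψ v := hvmax hc
    have h₄ : φ v ≤ φ c := hφ hv
    exact abs_sub_le_iff.2 ⟨by linarith, by linarith⟩
  refine ⟨v, hv, ?_, hnear⟩
  rcases hcand with rfl | rfl | hknot
  exacts [hLknot.resolve_right hnear.not_gt, hRknot.resolve_right hnear.not_gt, hknot]

theorem exists_knot_near_of_isExtrOn (hψ : IsPolyOn ψ m t w) {φ : ℝ → ℝ} {η L c R : ℝ}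
    (hL : 0 ≤ L) (hLc : L ≤ c) (hcR : c ≤ R) (hR : R ≤ 1) (hφ : IsExtrOn φ (Icc L R) c)
    (hclose : ∀ u ∈ Icc L R, |φ u - ψ u| ≤ η)
    (hLknot : L ∈ t '' Iio m ∨ η < |φ c - ψ L|) (hRknot : R ∈ t '' Iio m ∨ η < |φ c - ψ R|) :
    ∃ v ∈ Icc L R, v ∈ t '' Iio m ∧ |φ c - ψ v| ≤ η := by
  rcases hφ with hmin | hmax
  · have habs : ∀ x y, |-φ x - -ψ y| = |φ x - ψ y| := fun x y => by
      rw [neg_sub_neg, abs_sub_comm]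
    simp only [← habs] at hclose hLknot hRknot ⊢
    exact hψ.neg.exists_knot_near_of_isMaxOn (φ := fun x => -φ x) hL hLc hcR hR hmin.neg hclose
      hLknot hRknot
  · exact hψ.exists_knot_near_of_isMaxOn hL hLc hcR hR hmax hclose hLknot hRknot

theorem exists_monotone_knots_near (hψ : IsPolyOn ψ m t w) {φ : ℝ → ℝ} {η : ℝ} {ℓ : ℕ}
    {q : ℕ → ℝ} (hq0 : q 0 = 0) (hq1 : q (ℓ - 1) = 1) (hqI : ∀ i < ℓ, q i ∈ Icc (0 : ℝ) 1)
    (hq : ∀ i, i + 1 < ℓ → q i ≤ q (i + 1)) (hclose : ∀ u ∈ Icc (0 : ℝ) 1, |φ u - ψ u| ≤ η)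
    (hextr : ∀ k, k + 2 < ℓ → IsExtrOn φ (Icc (q k) (q (k + 2))) (q (k + 1)))
    (hgap : ∀ k, 1 ≤ k → k + 2 < ℓ → 2 * η < |φ (q (k + 1)) - φ (q k)|) :
    ∃ p : ℕ → ℝ, Monotone p ∧ ∀ i < ℓ, p i ∈ t '' Iio m ∧ |φ (q i) - ψ (p i)| ≤ η := by
  let P : ℕ → ℝ → Prop := fun k x =>
    x ∈ t '' Iio m ∧ (k < ℓ → |φ (q k) - ψ x| ≤ η) ∧ (k + 1 < ℓ → x ≤ q (k + 1))
  have hP₀ : P 0 0 := ⟨hψ.zero_mem_knots, fun _ => hq0 ▸ hclose 0 ⟨le_rfl, zero_le_one⟩,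
    fun h => (hqI 1 h).1⟩
  suffices hstep : ∀ k x, P k x → ∃ y, x ≤ y ∧ P (k + 1) y by
    obtain ⟨p, hp, hP⟩ := exists_monotone_of_forall_exists_le hP₀ hstep
    exact ⟨p, hp, fun i hi => ⟨(hP i).1, (hP i).2.1 hi⟩⟩
  rintro k x ⟨hx, -, hxq⟩
  have hx01 := hψ.knots_subset_Icc hx
  rcases lt_trichotomy (k + 2) ℓ with hk | hk | hk
  · have hqk : q k ∈ t '' Iio m ∨ η < |φ (q (k + 1)) - ψ (q k)| := by
      rcases Nat.eq_zero_or_pos k with rfl | hk1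
      · exact Or.inl (hq0 ▸ hψ.zero_mem_knots)
      · exact Or.inr (lt_abs_sub_of_two_mul_lt (hgap k hk1 hk) (hclose _ (hqI k (by omega))))
    have hLknot : max x (q k) ∈ t '' Iio m ∨ η < |φ (q (k + 1)) - ψ (max x (q k))| := by
      rcases max_choice x (q k) with h | h <;> rw [h]
      exacts [Or.inl hx, hqk]
    have hRknot : q (k + 2) ∈ t '' Iio m ∨ η < |φ (q (k + 1)) - ψ (q (k + 2))| := by
      rcases (show k + 3 = ℓ ∨ k + 3 < ℓ by omega) with hk3 | hk3
      · exact Or.inl (by rw [show k + 2 = ℓ - 1 by omega, hq1]; exact hψ.one_mem_knots)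
      · refine Or.inr (lt_abs_sub_of_two_mul_lt ?_ (hclose _ (hqI _ hk)))
        rw [abs_sub_comm]
        exact hgap (k + 1) (by omega) hk3
    obtain ⟨v, hv, hvknot, hvnear⟩ := hψ.exists_knot_near_of_isExtrOn
      (le_max_of_le_left hx01.1) (max_le (hxq (by omega)) (hq k (by omega))) (hq (k + 1) hk)
      (hqI _ hk).2 ((hextr k hk).on_subset (Icc_subset_Icc (le_max_right _ _) le_rfl))
      (fun u hu => hclose u ⟨hx01.1.trans ((le_max_left _ _).trans hu.1), hu.2.trans (hqI _ hk).2⟩)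
      hLknot hRknot
    exact ⟨v, (le_max_left _ _).trans hv.1, hvknot, fun _ => hvnear, fun _ => hv.2⟩
  · refine ⟨1, hx01.2, hψ.one_mem_knots, fun _ => ?_, fun h => absurd h (by omega)⟩
    rw [show k + 1 = ℓ - 1 by omega, hq1]
    exact hclose 1 ⟨zero_le_one, le_rfl⟩
  · exact ⟨x, le_rfl, hx, fun h => absurd h (by omega), fun h => absurd h (by omega)⟩

end IsPolyOn

namespace IsReparam

variable {f : ℝ → ℝ}

theorem monotoneOn (hf : IsReparam f) : MonotoneOn f (Icc 0 1) :=
  hf.2.1.monotoneOn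

theorem mapsTo (hf : IsReparam f) : MapsTo f (Icc 0 1) (Icc 0 1) := by
  simpa only [hf.2.2.1, hf.2.2.2] using hf.monotoneOn.mapsTo_Icc

theorem surjOn (hf : IsReparam f) : SurjOn f (Icc 0 1) (Icc 0 1) := by
  simpa only [SurjOn, hf.2.2.1, hf.2.2.2] using intermediate_value_Icc zero_le_one hf.1

end IsReparam

theorem exists_reparam_of_frechetDist_lt {τ π : ℝ → ℝ} {Cτ Cπ η : ℝ}
    (hτ : ∀ u ∈ Icc (0 : ℝ) 1, |τ u| ≤ Cτ) (hπ : ∀ u ∈ Icc (0 : ℝ) 1, |π u| ≤ Cπ)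
    (h : frechetDist τ π < η) :
    ∃ f, IsReparam f ∧ ∀ u ∈ Icc (0 : ℝ) 1, |τ (f u) - π u| < η := by
  have : Nonempty {f : ℝ → ℝ // IsReparam f} :=
    ⟨⟨id, continuousOn_id, strictMonoOn_id, rfl, rfl⟩⟩
  obtain ⟨⟨f, hf⟩, hlt⟩ := exists_lt_of_ciInf_lt h
  have hbdd : BddAbove (range fun u : Icc (0 : ℝ) 1 => |τ (f u) - π u|) := by
    refine ⟨Cτ + Cπ, ?_⟩
    rintro _ ⟨u, rfl⟩
    exact (abs_sub _ _).trans (add_le_add (hτ _ (hf.mapsTo u.2)) (hπ _ u.2))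
  exact ⟨f, hf, fun u hu => (le_ciSup hbdd ⟨u, hu⟩).trans_lt hlt⟩

namespace IsSignature

variable {δ : ℝ} {τ : ℝ → ℝ} {ℓ : ℕ} {s : ℕ → ℝ}

theorem strictMonoOn (hsig : IsSignature δ τ ℓ s) : StrictMonoOn s (Iio ℓ) :=
  strictMonoOn_Iio_of_lt_add_one hsig.2.2.2.1

theorem mem_Icc (hsig : IsSignature δ τ ℓ s) {i : ℕ} (hi : i < ℓ) : s i ∈ Icc 0 1 := by
  simpa only [hsig.2.1, hsig.2.2.1] using hsig.strictMonoOn.monotoneOn.apply_mem_Icc_of_lt hi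

theorem edge_into_inner (hsig : IsSignature δ τ ℓ s) (hδ : 0 ≤ δ) {i : ℕ} (hi : i + 3 ≤ ℓ)
    {x : ℝ} (hx : x ∈ Icc (s i) (s (i + 1))) :
    τ x ∈ uIcc (τ (s i)) (τ (s (i + 1))) ∪ Icc (τ (s i) - δ) (τ (s i) + δ) ∧
      δ < |τ (s (i + 1)) - τ (s i)| := by
  obtain ⟨-, -, -, -, -, -, hedge, hfirst, -, hrange, hrange_first, -, -⟩ := hsig
  rcases Nat.eq_zero_or_pos i with rfl | hi1
  · exact ⟨hrange_first (by omega) x hx, hfirst⟩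
  · exact ⟨Or.inl (hrange i hi1 hi x hx), by linarith [hedge i hi1 hi]⟩

theorem edge_out_of_inner (hsig : IsSignature δ τ ℓ s) (hδ : 0 ≤ δ) {i : ℕ} (hi1 : 1 ≤ i)
    (hi : i + 2 ≤ ℓ) {x : ℝ} (hx : x ∈ Icc (s i) (s (i + 1))) :
    τ x ∈ uIcc (τ (s (i + 1))) (τ (s i)) ∪ Icc (τ (s (i + 1)) - δ) (τ (s (i + 1)) + δ) ∧
      δ < |τ (s i) - τ (s (i + 1))| := by
  obtain ⟨-, -, -, -, -, -, hedge, -, hlast, hrange, -, hrange_last, -⟩ := hsig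
  rcases (show i + 3 ≤ ℓ ∨ ℓ = i + 2 by omega) with hi3 | rfl
  · refine ⟨Or.inl (uIcc_comm (τ (s i)) _ ▸ hrange i hi1 hi3 x hx), ?_⟩
    rw [abs_sub_comm]
    linarith [hedge i hi1 hi3]
  · simp only [show i + 2 - 2 = i by omega, show i + 2 - 1 = i + 1 by omega] at hrange_last hlast
    exact ⟨uIcc_comm (τ (s (i + 1))) _ ▸ hrange_last (by omega) x hx,
      abs_sub_comm (τ (s i)) _ ▸ hlast⟩

theorem isExtrOn (hsig : IsSignature δ τ ℓ s) (hδ : 0 ≤ δ) {k : ℕ} (hk : k + 3 ≤ ℓ) :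
    IsExtrOn τ (Icc (s k) (s (k + 2))) (s (k + 1)) := by
  have hside : ∀ x ∈ Icc (s k) (s (k + 2)), ∃ a ∈ ({τ (s k), τ (s (k + 2))} : Set ℝ),
      (a ≤ τ (s (k + 1)) → τ x ≤ τ (s (k + 1))) ∧ (τ (s (k + 1)) ≤ a → τ (s (k + 1)) ≤ τ x) := by
    rintro x ⟨hx1, hx2⟩
    rcases le_total x (s (k + 1)) with h | h
    · obtain ⟨hx, hedge⟩ := hsig.edge_into_inner hδ hk ⟨hx1, h⟩
      exact ⟨_, Or.inl rfl, le_and_le_of_mem_uIcc_union_Icc hx hedge⟩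
    · obtain ⟨hx, hedge⟩ := hsig.edge_out_of_inner hδ (by omega) (by omega) ⟨h, hx2⟩
      exact ⟨_, Or.inr rfl, le_and_le_of_mem_uIcc_union_Icc hx hedge⟩
  have hnd := hsig.2.2.2.2.1 (k + 1) (by omega) (by omega)
  simp only [Nat.add_sub_cancel, Set.mem_uIcc, not_or, not_and_or, not_le] at hnd
  rcases hnd with ⟨h₁ | h₁, h₂ | h₂⟩
  · refine Or.inl fun x hx => ?_
    obtain ⟨a, rfl | rfl, -, ha⟩ := hside x hx <;> exact ha (by linarith)
  · linarith
  · linarith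
  · refine Or.inr fun x hx => ?_
    obtain ⟨a, rfl | rfl, ha, -⟩ := hside x hx <;> exact ha (by linarith)

theorem exists_reparam_preimage (hsig : IsSignature δ τ ℓ s) (hδ : 0 ≤ δ) {f : ℝ → ℝ}
    (hf : IsReparam f) :
    ∃ q : ℕ → ℝ, q 0 = 0 ∧ q (ℓ - 1) = 1 ∧ (∀ i < ℓ, q i ∈ Icc 0 1 ∧ f (q i) = s i) ∧
      (∀ i, i + 1 < ℓ → q i ≤ q (i + 1)) ∧
      ∀ k, k + 2 < ℓ → IsExtrOn (τ ∘ f) (Icc (q k) (q (k + 2))) (q (k + 1)) := by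
  have hpre : ∀ i, ∃ u ∈ Icc (0 : ℝ) 1, i < ℓ → f u = s i := fun i => by
    by_cases hi : i < ℓ
    · obtain ⟨u, hu, hfu⟩ := hf.surjOn (hsig.mem_Icc hi)
      exact ⟨u, hu, fun _ => hfu⟩
    · exact ⟨0, ⟨le_rfl, zero_le_one⟩, fun h => absurd h hi⟩
  choose q hqI hfq using hpre
  have hℓ := hsig.1
  have hq_le : ∀ i j, i < ℓ → j < ℓ → i ≤ j → q i ≤ q j := fun i j hi hj hij => by
    rw [← hf.2.1.le_iff_le (hqI i) (hqI j), hfq i hi, hfq j hj]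
    exact hsig.strictMonoOn.monotoneOn hi hj hij
  refine ⟨q, hf.2.1.injOn (hqI 0) ⟨le_rfl, zero_le_one⟩ ?_,
    hf.2.1.injOn (hqI _) ⟨zero_le_one, le_rfl⟩ ?_, fun i hi => ⟨hqI i, hfq i hi⟩,
    fun i hi => hq_le i (i + 1) (by omega) hi (by omega), fun k hk => ?_⟩
  · rw [hfq 0 (by omega), hf.2.2.1, hsig.2.1]
  · rw [hfq _ (by omega), hf.2.2.2, hsig.2.2.1]
  · have hmaps : MapsTo f (Icc (q k) (q (k + 2))) (Icc (s k) (s (k + 2))) := by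
      rw [← hfq k (by omega), ← hfq (k + 2) hk]
      exact (hf.monotoneOn.mono (Icc_subset_Icc (hqI k).1 (hqI (k + 2)).2)).mapsTo_Icc
    exact (hsig.isExtrOn hδ (by omega)).comp_mapsTo hmaps (hfq (k + 1) (by omega))

end IsSignature

theorem signature_ranges_hit_general (δ : ℝ) (hδ : 0 ≤ δ)
    (τ : ℝ → ℝ) (m : ℕ) (t w : ℕ → ℝ) (hτ : IsPolyOn τ m t w)
    (ℓ : ℕ) (s : ℕ → ℝ) (hsig : IsSignature δ τ ℓ s)
    (π : ℝ → ℝ) (m' : ℕ) (t' w' : ℕ → ℝ) (hπ : IsPolyOn π m' t' w')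
    (hd : frechetDist τ π ≤ δ) :
    ∃ p : ℕ → ℝ,
      (∀ i, i + 1 < ℓ → p i ≤ p (i + 1)) ∧
      (∀ i, i < ℓ → 0 ≤ p i ∧ p i ≤ 1 ∧ (∃ j, j < m' ∧ p i = t' j) ∧
        π (p i) ∈ Set.Icc (τ (s i) - δ) (τ (s i) + δ)) := by
  have hslack : ∀ᶠ ε in 𝓝[>] (0 : ℝ), 0 < ε ∧
      (∀ k < ℓ, 1 ≤ k → k + 2 < ℓ → 2 * (δ + ε) < |τ (s (k + 1)) - τ (s k)|) ∧
      ∀ i < ℓ, ∀ j < m', |τ (s i) - π (t' j)| ≤ δ + ε → |τ (s i) - π (t' j)| ≤ δ := by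
    refine eventually_mem_nhdsWithin.and (.and (eventually_forall_lt fun k _ => ?_)
      (eventually_forall_lt fun i _ => eventually_forall_lt fun j _ => eventually_le_of_le_add _ _))
    by_cases hk : 1 ≤ k ∧ k + 2 < ℓ
    · filter_upwards [eventually_two_mul_add_lt (hsig.2.2.2.2.2.2.1 k hk.1 hk.2)] with ε hε
      exact fun _ _ => hε
    · exact Eventually.of_forall fun _ h₁ h₂ => absurd ⟨h₁, h₂⟩ hk
  obtain ⟨ε, hε, hgap, hsnap⟩ := hslack.exists
  obtain ⟨f, hf, hclose⟩ := exists_reparam_of_frechetDist_lt (fun u hu => hτ.abs_le_sum hu)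
    (fun u hu => hπ.abs_le_sum hu) (hd.trans_lt (lt_add_of_pos_right δ hε))
  obtain ⟨q, hq0, hq1, hqs, hq, hextr⟩ := hsig.exists_reparam_preimage hδ hf
  obtain ⟨p, hp, hpknot⟩ := hπ.exists_monotone_knots_near (φ := τ ∘ f) hq0 hq1
    (fun i hi => (hqs i hi).1) hq (fun u hu => (hclose u hu).le) hextr fun k hk1 hk => by
      simpa only [Function.comp_apply, (hqs _ (by omega : k + 1 < ℓ)).2, (hqs k (by omega)).2]
        using hgap k (by omega) hk1 hk
  refine ⟨p, fun i _ => hp i.le_succ, fun i hi => ?_⟩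
  obtain ⟨⟨j, hj, hpj⟩, hnear⟩ := hpknot i hi
  rw [Function.comp_apply, (hqs i hi).2, ← hpj] at hnear
  obtain ⟨h₁, h₂⟩ := abs_sub_le_iff.1 (hsnap i hi j hj hnear)
  have hp01 := hπ.knots_subset_Icc ⟨j, hj, hpj⟩
  exact ⟨hp01.1, hp01.2, ⟨j, hj, hpj.symm⟩, by rw [← hpj]; constructor <;> linarith⟩

/-- Lemma 3.2: if `σ` (parameters `s`, vertices `τ (s i)`, all
vertices of the polygonal curve `τ`) is a `δ`-signature of `τ`, then any polygonal
curve `π` with `d_F(τ, π) ≤ δ` has a vertex in each range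
`r i = [τ (s i) - δ, τ (s i) + δ]`, with these vertices appearing along `π` in the
order of `i`. -/
theorem signature_ranges_hit (δ : ℝ) (hδ : 0 ≤ δ)
    (τ : ℝ → ℝ) (m : ℕ) (t w : ℕ → ℝ) (hτ : IsPolyOn τ m t w)
    (ℓ : ℕ) (s : ℕ → ℝ) (hsig : IsSignature δ τ ℓ s)
    (hvert : ∀ i, i < ℓ → ∃ j, j < m ∧ s i = t j)
    (π : ℝ → ℝ) (m' : ℕ) (t' w' : ℕ → ℝ) (hπ : IsPolyOn π m' t' w')
    (hd : frechetDist τ π ≤ δ) :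
    ∃ p : ℕ → ℝ,
      (∀ i, i + 1 < ℓ → p i ≤ p (i + 1)) ∧
      (∀ i, i < ℓ → 0 ≤ p i ∧ p i ≤ 1 ∧ (∃ j, j < m' ∧ p i = t' j) ∧
        π (p i) ∈ Set.Icc (τ (s i) - δ) (τ (s i) + δ)) :=
  signature_ranges_hit_general δ hδ τ m t w hτ ℓ s hsig π m' t' w' hπ hd
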